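/- arXiv:1910.04621 — 2 statements merged into one kernel-verified Lean document; each statement's English description precedes it below -/
import Mathlib

section
/- The Fenchel-Legendre transform of y ↦ λ(exp(‖y‖) - 1) on a Hilbert space equals α ↦ 1{‖α‖ ≥ λ}·(‖α‖ log(‖α‖/(λe)) + λ), i.e., it is 0 when ‖α‖ < λ and equals ‖α‖ log(‖α‖/(λe)) + λ when ‖α‖ ≥ λ, for λ > 0. -/
open scoped RealInnerProductSpace

variable {Y : Type*} [NormedAddCommGroup Y] [InnerProductSpace ℝ Y]

/-- Fenchel-Legendre transform: `f*(α) = sup_y ⟨α, y⟩ - f(y)`. -/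
noncomputable def fenchel (f : Y → EReal) (α : Y) : EReal :=
  ⨆ y : Y, ((⟪α, y⟫ : ℝ) : EReal) - f y

lemma key_le (l a t : ℝ) (hl : 0 < l) (hal : l ≤ a) :
    a * t - l * (Real.exp t - 1) ≤ a * Real.log (a / (l * Real.exp 1)) + l := by
  have ha : 0 < a := lt_of_lt_of_le hl hal
  have hs : Real.exp (Real.log (a / l)) = a / l := Real.exp_log (by positivity)
  set s := Real.log (a / l) with hsdef
  have h1 : t - s + 1 ≤ Real.exp (t - s) := Real.add_one_le_exp _
  have h2 : Real.exp (t - s) * Real.exp s = Real.exp t := by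
    rw [← Real.exp_add]; ring_nf
  have hls : l * Real.exp s = a := by rw [hs]; field_simp
  have hlog : Real.log (a / (l * Real.exp 1)) = s - 1 := by
    rw [hsdef, Real.log_div ha.ne' (by positivity), Real.log_div ha.ne' hl.ne',
      Real.log_mul hl.ne' (Real.exp_ne_zero 1), Real.log_exp]
    ring
  rw [hlog]
  have h3 : (t - s + 1) * Real.exp s ≤ Real.exp t := by
    calc (t - s + 1) * Real.exp s ≤ Real.exp (t - s) * Real.exp s :=
          mul_le_mul_of_nonneg_right h1 (Real.exp_pos s).le
      _ = Real.exp t := h2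
  have h4 : a * (t - s + 1) ≤ l * Real.exp t := by
    calc a * (t - s + 1) = l * ((t - s + 1) * Real.exp s) := by rw [← hls]; ring
      _ ≤ l * Real.exp t := mul_le_mul_of_nonneg_left h3 hl.le
  nlinarith [h4]

/-- The Fenchel-Legendre transform of `y ↦ λ(exp(‖y‖) - 1)` equals `0` when `‖α‖ < λ`
and `‖α‖ log(‖α‖/(λe)) + λ` when `‖α‖ ≥ λ`. -/
theorem fenchel_exp_norm (l : ℝ) (hl : 0 < l) (α : Y) :
    fenchel (fun y : Y => ((l * (Real.exp ‖y‖ - 1) : ℝ) : EReal)) α =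
      if ‖α‖ < l then (0 : EReal)
      else ((‖α‖ * Real.log (‖α‖ / (l * Real.exp 1)) + l : ℝ) : EReal) := by
  have hsub : ∀ y : Y, ((⟪α, y⟫ : ℝ) : EReal) - ((l * (Real.exp ‖y‖ - 1) : ℝ) : EReal)
      = (((⟪α, y⟫ : ℝ) - l * (Real.exp ‖y‖ - 1) : ℝ) : EReal) := fun y =>
    (EReal.coe_sub _ _).symm
  unfold fenchel
  simp only [hsub]
  apply le_antisymm
  · apply iSup_le
    intro y
    split_ifs with h
    · rw [show (0 : EReal) = ((0 : ℝ) : EReal) by simp, EReal.coe_le_coe_iff]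
      have hcs : ⟪α, y⟫ ≤ ‖α‖ * ‖y‖ := real_inner_le_norm α y
      have he := Real.add_one_le_exp ‖y‖
      nlinarith [norm_nonneg y, norm_nonneg α, h.le]
    · rw [EReal.coe_le_coe_iff]
      have hcs : ⟪α, y⟫ ≤ ‖α‖ * ‖y‖ := real_inner_le_norm α y
      have := key_le l ‖α‖ ‖y‖ hl (not_lt.mp h)
      linarith
  · have witness : ∀ y : Y, (((⟪α, y⟫ : ℝ) - l * (Real.exp ‖y‖ - 1) : ℝ) : EReal)
        ≤ ⨆ z : Y, (((⟪α, z⟫ : ℝ) - l * (Real.exp ‖z‖ - 1) : ℝ) : EReal) :=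
      fun y => le_iSup (fun z : Y => (((⟪α, z⟫ : ℝ) - l * (Real.exp ‖z‖ - 1) : ℝ) : EReal)) y
    split_ifs with h
    · refine le_trans ?_ (witness 0)
      simp
    · have hla : l ≤ ‖α‖ := not_lt.mp h
      have ha : 0 < ‖α‖ := lt_of_lt_of_le hl hla
      set a := ‖α‖ with hadef
      have hs : Real.exp (Real.log (a / l)) = a / l := Real.exp_log (by positivity)
      set s := Real.log (a / l) with hsdef
      have hsnn : 0 ≤ s := Real.log_nonneg (by rw [le_div_iff₀ hl]; linarith)
      have hlog : Real.log (a / (l * Real.exp 1)) = s - 1 := by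
        rw [hsdef, Real.log_div ha.ne' (by positivity), Real.log_div ha.ne' hl.ne',
          Real.log_mul hl.ne' (Real.exp_ne_zero 1), Real.log_exp]
        ring
      set y₀ : Y := (s / a) • α with hy₀
      have hnorm : ‖y₀‖ = s := by
        rw [hy₀, norm_smul, Real.norm_eq_abs, abs_of_nonneg (by positivity), ← hadef]
        field_simp
      have hinner : ⟪α, y₀⟫ = s * a := by
        rw [hy₀, real_inner_smul_right, real_inner_self_eq_norm_sq, ← hadef]
        field_simp
      refine le_trans ?_ (witness y₀)
      rw [EReal.coe_le_coe_iff, hnorm, hinner, hlog, hs]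
      have : l * (a / l - 1) = a - l := by field_simp
      rw [this]
      ring_nf
      linarith
end

section
/- Dual optimum lies in the output span: let Y be a Hilbert space, 𝖸 = span(y_1, …, y_n), suppose each convex function ℓ_i* : Y → ℝ ∪ {+∞} satisfies ℓ_i*(α^𝖸) ≤ ℓ_i*(α^𝖸 + α^⊥) for all α^𝖸 ∈ 𝖸, α^⊥ ∈ 𝖸^⊥, and suppose each K(x_i, x_j) is a bounded positive operator-valued kernel block leaving 𝖸 invariant. Then for any (α_1, …, α_n) ∈ Y^n, replacing each α_i by its orthogonal projection onto 𝖸 does not increase the objective Σ_i ℓ_i*(-α_i) + (1/(2Λn)) Σ_{i,j} ⟨α_i, K(x_i, x_j) α_j⟩. -/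
open scoped RealInnerProductSpace

/-- Dual optimum lies in the output span: if each `ℓᵢ*` does not increase when the
component orthogonal to `𝖸 = span(y₁,…,yₙ)` is removed, and the kernel blocks
`K(xᵢ,xⱼ)` are symmetric, positive and leave `𝖸` invariant, then projecting the
dual variables `αᵢ` onto `𝖸` does not increase the dual objective
`Σᵢ ℓᵢ*(-αᵢ) + (1/(2Λn)) Σᵢⱼ ⟨αᵢ, K(xᵢ,xⱼ)αⱼ⟩`. -/
theorem dual_optimum_in_span {Y : Type*}
    [NormedAddCommGroup Y] [InnerProductSpace ℝ Y] [CompleteSpace Y]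
    (n : ℕ) (hn : 0 < n) (y : Fin n → Y) (Λ : ℝ) (hΛ : 0 < Λ)
    (lstar : Fin n → Y → EReal)
    (hmono : ∀ (i : Fin n) (a b : Y), a ∈ Submodule.span ℝ (Set.range y) →
      b ∈ (Submodule.span ℝ (Set.range y))ᗮ → lstar i a ≤ lstar i (a + b))
    (K : Fin n → Fin n → Y →L[ℝ] Y)
    (hsym : ∀ i j : Fin n, K i j = ContinuousLinearMap.adjoint (K j i))
    (hpos : ∀ z : Fin n → Y, 0 ≤ ∑ i, ∑ j, ⟪z i, K i j (z j)⟫)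
    (hinv : ∀ (i j : Fin n) (v : Y), v ∈ Submodule.span ℝ (Set.range y) →
      K i j v ∈ Submodule.span ℝ (Set.range y)) :
    ∀ α a b : Fin n → Y,
      (∀ i, a i ∈ Submodule.span ℝ (Set.range y)) →
      (∀ i, b i ∈ (Submodule.span ℝ (Set.range y))ᗮ) →
      (∀ i, α i = a i + b i) →
      (∑ i, lstar i (-(a i))) +
          ((1 / (2 * Λ * n) * ∑ i, ∑ j, ⟪a i, K i j (a j)⟫ : ℝ) : EReal) ≤
        (∑ i, lstar i (-(α i))) +
          ((1 / (2 * Λ * n) * ∑ i, ∑ j, ⟪α i, K i j (α j)⟫ : ℝ) : EReal) := by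
  intro α a b ha hb hab
  have hcross : ∀ i j : Fin n, ⟪a i, K i j (b j)⟫ = 0 := by
    intro i j
    rw [hsym i j, ContinuousLinearMap.adjoint_inner_right]
    exact (hb j) _ (hinv j i _ (ha i))
  have hcross' : ∀ i j : Fin n, ⟪b i, K i j (a j)⟫ = 0 := by
    intro i j
    rw [real_inner_comm]
    exact (hb i) _ (hinv i j _ (ha j))
  have hquad : (∑ i, ∑ j, ⟪a i, K i j (a j)⟫) ≤ ∑ i, ∑ j, ⟪α i, K i j (α j)⟫ := by
    have hexp : (∑ i, ∑ j, ⟪α i, K i j (α j)⟫)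
        = (∑ i, ∑ j, ⟪a i, K i j (a j)⟫) + ∑ i, ∑ j, ⟪b i, K i j (b j)⟫ := by
      rw [← Finset.sum_add_distrib]
      refine Finset.sum_congr rfl fun i _ => ?_
      rw [← Finset.sum_add_distrib]
      refine Finset.sum_congr rfl fun j _ => ?_
      simp only [hab, map_add, inner_add_left, inner_add_right, hcross i j, hcross' i j]
      ring
    rw [hexp]
    linarith [hpos b]
  have hc : (0:ℝ) ≤ 1 / (2 * Λ * n) := by
    apply div_nonneg (by norm_num)
    positivity
  have h2 : ((1 / (2 * Λ * n) * ∑ i, ∑ j, ⟪a i, K i j (a j)⟫ : ℝ) : EReal)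
      ≤ ((1 / (2 * Λ * n) * ∑ i, ∑ j, ⟪α i, K i j (α j)⟫ : ℝ) : EReal) := by
    exact_mod_cast mul_le_mul_of_nonneg_left hquad hc
  have h1 : (∑ i, lstar i (-(a i))) ≤ ∑ i, lstar i (-(α i)) := by
    refine Finset.sum_le_sum fun i _ => ?_
    have : -(α i) = -(a i) + -(b i) := by rw [hab]; abel
    rw [this]
    exact hmono i _ _ (neg_mem (ha i)) (neg_mem (hb i))
  exact add_le_add h1 h2
end
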